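/- arXiv:1503.04885 — 6 statements merged into one kernel-verified Lean document; each statement's English description precedes it below -/
import Mathlib

section
/- Let Σ(t) satisfy the Lyapunov differential equation Σ̇ = (A - BB'Π)Σ + Σ(A - BB'Π)' + B₁B₁' and Π(t) satisfy the Riccati equation Π̇ = -A'Π - ΠA + ΠBB'Π, with Σ(t) invertible for all t. Then H(t) := Σ(t)⁻¹ - Π(t) satisfies Ḣ = -A'H - HA - HBB'H + (Π+H)(BB' - B₁B₁')(Π+H). -/
/-!
Differentiating `Σ Σ⁻¹ = 1` gives `d(Σ⁻¹)/dt = -Σ⁻¹ Σ̇ Σ⁻¹`. Conjugating the Lyapunov equation by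
`Σ⁻¹` cancels the `Σ` next to the closed-loop matrix `A - BB'Π`, so `d(Σ⁻¹)/dt` is a quadratic
expression in `Σ⁻¹ = Π + H`. Once the symmetry of `Π` rewrites `(A - BB'Π)'` as `A' - ΠBB'`,
subtracting the Riccati equation for `Π` leaves an identity in a noncommutative ring.
-/

open Matrix

attribute [local instance] Matrix.linftyOpNormedAddCommGroup Matrix.linftyOpNormedSpace
  Matrix.linftyOpNormedRing Matrix.linftyOpNormedAlgebra

theorem HasDerivAt.ringInverse {𝕜 R : Type*} [NontriviallyNormedField 𝕜] [NormedRing R]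
    [HasSummableGeomSeries R] [NormedAlgebra 𝕜 R] {f : 𝕜 → R} {f' : R} {t : 𝕜}
    (hf : HasDerivAt f f' t) (ht : IsUnit (f t)) :
    HasDerivAt (fun s => Ring.inverse (f s)) (-(Ring.inverse (f t) * f' * Ring.inverse (f t))) t := by
  obtain ⟨u, hu⟩ := ht
  have := (hu ▸ hasFDerivAt_ringInverse (𝕜 := 𝕜) u).comp_hasDerivAt t hf
  simpa [← hu, Function.comp_def] using this

section MatrixDeriv

variable {𝕜 : Type*} [RCLike 𝕜] {m n : Type*} [Fintype m] [Fintype n]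

theorem Matrix.hasDerivAt_iff_hasDerivAt_apply {f : 𝕜 → Matrix m n 𝕜} {f' : Matrix m n 𝕜}
    {t : 𝕜} : HasDerivAt f f' t ↔ ∀ i j, HasDerivAt (fun s => f s i j) (f' i j) t := by
  let e := (Matrix.ofLinearEquiv 𝕜 (m := m) (n := n) (α := 𝕜)).toContinuousLinearEquiv
  have he : HasDerivAt f f' t ↔ HasDerivAt (fun s => e.symm (f s)) (e.symm f') t :=
    ⟨fun h => (e.symm : Matrix m n 𝕜 →L[𝕜] m → n → 𝕜).hasFDerivAt.comp_hasDerivAt t h,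
      fun h => (e : (m → n → 𝕜) →L[𝕜] Matrix m n 𝕜).hasFDerivAt.comp_hasDerivAt t h⟩
  simp only [he, hasDerivAt_pi]
  rfl

theorem HasDerivAt.matrix_inv [DecidableEq n] {f : 𝕜 → Matrix n n 𝕜} {f' : Matrix n n 𝕜} {t : 𝕜}
    (hf : HasDerivAt f f' t) (ht : IsUnit (f t)) :
    HasDerivAt (fun s => (f s)⁻¹) (-((f t)⁻¹ * f' * (f t)⁻¹)) t := by
  simp_rw [nonsing_inv_eq_ringInverse]
  exact hf.ringInverse ht

end MatrixDeriv

section RiccatiIdentity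

variable {R : Type*} [Ring R] {S K : R}

theorem conj_lyapunov_eq (hKS : K * S = 1) (hSK : S * K = 1) (X Y Q : R) :
    K * (X * S + S * Y + Q) * K = K * X + Y * K + K * Q * K := calc
  K * (X * S + S * Y + Q) * K = K * X * (S * K) + (K * S) * Y * K + K * Q * K := by noncomm_ring
  _ = K * X + Y * K + K * Q * K := by rw [hSK, hKS, mul_one, one_mul]

/-- `K` stands for `Σ⁻¹`, `A'` for `Aᵀ`, `G` for `BBᵀ` and `Q` for `B₁B₁ᵀ`. -/
theorem inv_lyapunov_sub_riccati (hKS : K * S = 1) (hSK : S * K = 1) (A A' G Q P : R) :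
    -(K * ((A - G * P) * S + S * (A' - P * G) + Q) * K) - (-A' * P - P * A + P * G * P)
      = -A' * (K - P) - (K - P) * A - (K - P) * G * (K - P)
        + (P + (K - P)) * (G - Q) * (P + (K - P)) := by
  rw [conj_lyapunov_eq hKS hSK]
  noncomm_ring

end RiccatiIdentity

theorem stmt_0_general {n m p : ℕ}
    (A : ℝ → Matrix (Fin n) (Fin n) ℝ) (B : ℝ → Matrix (Fin n) (Fin m) ℝ)
    (B₁ : ℝ → Matrix (Fin n) (Fin p) ℝ)
    (S Pi : ℝ → Matrix (Fin n) (Fin n) ℝ)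
    (hPisym : ∀ t, (Pi t)ᵀ = Pi t)
    (hSinv : ∀ t, IsUnit (S t))
    (hS : ∀ t i j, HasDerivAt (fun s => S s i j)
      (((A t - B t * (B t)ᵀ * Pi t) * S t + S t * (A t - B t * (B t)ᵀ * Pi t)ᵀ
        + B₁ t * (B₁ t)ᵀ) i j) t)
    (hPi : ∀ t i j, HasDerivAt (fun s => Pi s i j)
      ((-(A t)ᵀ * Pi t - Pi t * A t + Pi t * (B t * (B t)ᵀ) * Pi t) i j) t) :
    ∀ t i j, HasDerivAt (fun s => ((S s)⁻¹ - Pi s) i j)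
      ((-(A t)ᵀ * ((S t)⁻¹ - Pi t) - ((S t)⁻¹ - Pi t) * A t
        - ((S t)⁻¹ - Pi t) * (B t * (B t)ᵀ) * ((S t)⁻¹ - Pi t)
        + (Pi t + ((S t)⁻¹ - Pi t)) * (B t * (B t)ᵀ - B₁ t * (B₁ t)ᵀ)
          * (Pi t + ((S t)⁻¹ - Pi t))) i j) t := by
  intro t
  rw [← Matrix.hasDerivAt_iff_hasDerivAt_apply]
  have hdet : IsUnit (S t).det := (isUnit_iff_isUnit_det _).mp (hSinv t)
  have hH := ((hasDerivAt_iff_hasDerivAt_apply.2 (hS t)).matrix_inv (hSinv t)).sub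
    (hasDerivAt_iff_hasDerivAt_apply.2 (hPi t))
  have hclosed : (A t - B t * (B t)ᵀ * Pi t)ᵀ = (A t)ᵀ - Pi t * (B t * (B t)ᵀ) := by
    simp only [transpose_sub, transpose_mul, transpose_transpose, hPisym t, Matrix.mul_assoc]
  rwa [hclosed, inv_lyapunov_sub_riccati (nonsing_inv_mul _ hdet) (mul_nonsing_inv _ hdet)]
    at hH

/-- If Σ satisfies the closed-loop Lyapunov ODE and Π the Riccati ODE, with Σ(t)
invertible for all t, then H = Σ⁻¹ - Π satisfies the stated matrix Riccati-type ODE. -/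
theorem stmt_0 {n m p : ℕ}
    (A : ℝ → Matrix (Fin n) (Fin n) ℝ) (B : ℝ → Matrix (Fin n) (Fin m) ℝ)
    (B₁ : ℝ → Matrix (Fin n) (Fin p) ℝ)
    (S Pi : ℝ → Matrix (Fin n) (Fin n) ℝ)
    (hAc : ∀ i j, Continuous fun t => A t i j)
    (hBc : ∀ i j, Continuous fun t => B t i j)
    (hB₁c : ∀ i j, Continuous fun t => B₁ t i j)
    (hSsym : ∀ t, (S t)ᵀ = S t) (hPisym : ∀ t, (Pi t)ᵀ = Pi t)
    (hSinv : ∀ t, IsUnit (S t))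
    (hS : ∀ t i j, HasDerivAt (fun s => S s i j)
      (((A t - B t * (B t)ᵀ * Pi t) * S t + S t * (A t - B t * (B t)ᵀ * Pi t)ᵀ
        + B₁ t * (B₁ t)ᵀ) i j) t)
    (hPi : ∀ t i j, HasDerivAt (fun s => Pi s i j)
      ((-(A t)ᵀ * Pi t - Pi t * A t + Pi t * (B t * (B t)ᵀ) * Pi t) i j) t) :
    ∀ t i j, HasDerivAt (fun s => ((S s)⁻¹ - Pi s) i j)
      ((-(A t)ᵀ * ((S t)⁻¹ - Pi t) - ((S t)⁻¹ - Pi t) * A t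
        - ((S t)⁻¹ - Pi t) * (B t * (B t)ᵀ) * ((S t)⁻¹ - Pi t)
        + (Pi t + ((S t)⁻¹ - Pi t)) * (B t * (B t)ᵀ - B₁ t * (B₁ t)ᵀ)
          * (Pi t + ((S t)⁻¹ - Pi t))) i j) t :=
  stmt_0_general A B B₁ S Pi hPisym hSinv hS hPi
end

section
/- For a symmetric positive definite matrix Σ and fixed A, B, B₁, the following are equivalent: (i) there exists X ∈ ℝ^{n×m} such that AΣ + ΣA' + B₁B₁' + BX' + XB' = 0; (ii) rank[[AΣ+ΣA'+B₁B₁', B],[B, 0]] = rank[[0, B],[B, 0]] (as block 2n×(n+m) by appropriate blocks matrices). -/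
/-!
Let `Q = B * Y` be the orthogonal projection onto the column space of `B` and `P = 1 - Q`.
Congruence by `[[1, Z], [0, 1]]` shows that the rank of `[[C, B], [Bᵀ, 0]]` depends on `C` only
modulo matrices `B * Zᵀ + Z * Bᵀ`, and every symmetric `C` is `P * C * P` modulo such matrices.
This gives (i) ⇒ (ii) and reduces (ii) ⇒ (i) to showing `P * C * P = 0`. Since
`Bᵀ * (P * C * P) = 0`, the kernel of `[[P * C * P, B], [Bᵀ, 0]]` lies in that of
`[[0, B], [Bᵀ, 0]]`; equal ranks make the kernels equal, so `P * C * P` vanishes on `ker Bᵀ`,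
which contains the range of `P`.
-/

open Matrix

namespace Matrix

variable {R : Type*} {k l m n : Type*} [Fintype m] [Fintype n]

section CommRing

variable [CommRing R]

theorem rank_fromBlocks_add_mul_transpose [DecidableEq m] [DecidableEq n] (C : Matrix n n R)
    (B Z : Matrix n m R) :
    (fromBlocks (C + B * Zᵀ + Z * Bᵀ) B Bᵀ 0).rank = (fromBlocks C B Bᵀ 0).rank := by
  set L : Matrix (n ⊕ m) (n ⊕ m) R := fromBlocks 1 Z 0 1
  have hL : IsUnit L.det := by simp [L]
  have hcongr :
      fromBlocks (C + B * Zᵀ + Z * Bᵀ) B Bᵀ 0 = L * fromBlocks C B Bᵀ 0 * Lᵀ := by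
    simp only [L, fromBlocks_transpose, fromBlocks_multiply, transpose_one, transpose_zero,
      Matrix.one_mul, Matrix.mul_one, Matrix.zero_mul, Matrix.mul_zero, add_zero, zero_add,
      fromBlocks_inj, and_self, and_true]
    abel
  rw [hcongr, rank_mul_eq_left_of_isUnit_det _ _ (by rwa [det_transpose]),
    rank_mul_eq_right_of_isUnit_det _ _ hL]

theorem mul_eq_zero_of_ker_le {A : Matrix k n R} {D : Matrix l n R}
    {P : Matrix n m R} (hker : LinearMap.ker A.mulVecLin ≤ LinearMap.ker D.mulVecLin)
    (hP : A * P = 0) : D * P = 0 := by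
  classical
  ext i j
  have hcol : P *ᵥ Pi.single j 1 ∈ LinearMap.ker A.mulVecLin := by
    rw [LinearMap.mem_ker, mulVecLin_apply, mulVec_mulVec, hP, zero_mulVec]
  have hDcol := LinearMap.mem_ker.1 (hker hcol)
  rw [mulVecLin_apply, mulVec_mulVec, mulVec_single_one] at hDcol
  exact congr_fun hDcol i

end CommRing

section LinearOrderedField

variable [Field R] [LinearOrder R] [IsStrictOrderedRing R]

theorem exists_transpose_mul_self_mul_eq_transpose (B : Matrix n m R) :
    ∃ Y : Matrix m n R, Bᵀ * B * Y = Bᵀ := by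
  classical
  have hrange : LinearMap.range (Bᵀ * B).mulVecLin = LinearMap.range Bᵀ.mulVecLin := by
    refine Submodule.eq_of_le_of_finrank_eq ?_ ?_
    · rw [mulVecLin_mul]
      exact LinearMap.range_comp_le_range _ _
    · change (Bᵀ * B).rank = Bᵀ.rank
      rw [rank_transpose_mul_self, rank_transpose]
  have hcol (j : n) : ∃ y, (Bᵀ * B) *ᵥ y = Bᵀ *ᵥ Pi.single j 1 :=
    (hrange ▸ ⟨_, rfl⟩ : Bᵀ *ᵥ Pi.single j 1 ∈ LinearMap.range (Bᵀ * B).mulVecLin)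
  choose y hy using hcol
  refine ⟨(of y)ᵀ, ?_⟩
  ext i j
  simp only [mulVec_single_one] at hy
  simpa [mul_apply, mulVec, dotProduct] using congr_fun (hy j) i

theorem exists_isSymm_mul_mul_eq_self (B : Matrix n m R) :
    ∃ Y : Matrix m n R, (B * Y).IsSymm ∧ B * Y * B = B := by
  obtain ⟨Y, hY⟩ := exists_transpose_mul_self_mul_eq_transpose B
  have hQ : (B * Y)ᵀ = Yᵀ * (Bᵀ * B) * Y := by
    rw [transpose_mul]
    nth_rw 1 [← hY]
    simp only [Matrix.mul_assoc]
  have hsymm : (B * Y).IsSymm := by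
    rw [IsSymm, hQ, ← transpose_transpose (B * Y), hQ]
    simp [Matrix.mul_assoc]
  refine ⟨Y, hsymm, transpose_injective ?_⟩
  rw [transpose_mul, hsymm.eq, ← Matrix.mul_assoc, hY]

theorem exists_eq_add_mul_transpose_of_isSymm [DecidableEq n] {C : Matrix n n R} (hC : C.IsSymm)
    {B : Matrix n m R} {Y : Matrix m n R} (hQ : (B * Y).IsSymm) :
    ∃ X : Matrix n m R, C = (1 - B * Y) * C * (1 - B * Y) + B * Xᵀ + X * Bᵀ := by
  -- With `Q = B * Y`, `C - (1 - Q) * C * (1 - Q) = Q * C + C * Q - Q * C * Q`, split evenly.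
  refine ⟨(C - (2⁻¹ : R) • (B * Y * C)) * Yᵀ, ?_⟩
  have hBX : B * ((C - (2⁻¹ : R) • (B * Y * C)) * Yᵀ)ᵀ
      = B * Y * C - (2⁻¹ : R) • (B * Y * C * (B * Y)) := by
    rw [transpose_mul, transpose_sub, transpose_smul, transpose_mul, hC.eq, hQ.eq,
      transpose_transpose]
    simp only [Matrix.mul_sub, Matrix.mul_smul, Matrix.mul_assoc]
  have hXB : (C - (2⁻¹ : R) • (B * Y * C)) * Yᵀ * Bᵀ
      = C * (B * Y) - (2⁻¹ : R) • (B * Y * C * (B * Y)) := by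
    rw [Matrix.mul_assoc, ← transpose_mul, hQ.eq, Matrix.sub_mul, Matrix.smul_mul]
  rw [hBX, hXB]
  simp only [Matrix.sub_mul, Matrix.mul_sub, Matrix.one_mul, Matrix.mul_one]
  module

theorem ker_mulVecLin_fromBlocks_le {D : Matrix n n R} {B : Matrix n m R} (hBD : Bᵀ * D = 0) :
    LinearMap.ker (fromBlocks D B Bᵀ 0).mulVecLin ≤
      LinearMap.ker (fromBlocks 0 B Bᵀ 0).mulVecLin := by
  intro v hv
  simp only [LinearMap.mem_ker, mulVecLin_apply, fromBlocks_mulVec, ← Sum.elim_zero_zero,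
    Sum.elim_eq_iff, zero_mulVec, zero_add, add_zero] at hv ⊢
  obtain ⟨hDB, hBt⟩ := hv
  refine ⟨?_, hBt⟩
  have hBtB : v ∘ Sum.inr ∈ LinearMap.ker (Bᵀ * B).mulVecLin := by
    have := congrArg (Bᵀ *ᵥ ·) hDB
    simp only [mulVec_add, mulVec_mulVec, hBD, zero_mulVec, zero_add, mulVec_zero] at this
    exact this
  exact LinearMap.mem_ker.1 ((ker_mulVecLin_transpose_mul_self B).le hBtB)

theorem ker_mulVecLin_transpose_le_of_rank_fromBlocks_eq {D : Matrix n n R} {B : Matrix n m R}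
    (hBD : Bᵀ * D = 0) (hrank : (fromBlocks D B Bᵀ 0).rank = (fromBlocks 0 B Bᵀ 0).rank) :
    LinearMap.ker Bᵀ.mulVecLin ≤ LinearMap.ker D.mulVecLin := by
  have hker := Submodule.eq_of_le_of_finrank_eq (ker_mulVecLin_fromBlocks_le hBD) (by
    have h₁ := LinearMap.finrank_range_add_finrank_ker (fromBlocks D B Bᵀ 0).mulVecLin
    have h₂ := LinearMap.finrank_range_add_finrank_ker (fromBlocks 0 B Bᵀ 0).mulVecLin
    unfold rank at hrank
    omega)
  intro x hx
  rw [LinearMap.mem_ker, mulVecLin_apply] at hx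
  have hN : Sum.elim x 0 ∈ LinearMap.ker (fromBlocks (0 : Matrix n n R) B Bᵀ 0).mulVecLin := by
    simp [fromBlocks_mulVec, hx]
  rw [← hker] at hN
  simp only [LinearMap.mem_ker, mulVecLin_apply, fromBlocks_mulVec, ← Sum.elim_zero_zero,
    Sum.elim_eq_iff] at hN
  simpa using hN.1

theorem exists_add_mul_transpose_eq_zero_iff_rank_fromBlocks_eq [DecidableEq m] [DecidableEq n]
    {C : Matrix n n R} (hC : C.IsSymm) (B : Matrix n m R) :
    (∃ X : Matrix n m R, C + B * Xᵀ + X * Bᵀ = 0) ↔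
      (fromBlocks C B Bᵀ 0).rank = (fromBlocks 0 B Bᵀ 0).rank := by
  constructor
  · rintro ⟨X, hX⟩
    have hC0 : C = 0 + B * (-X)ᵀ + (-X) * Bᵀ := by
      rw [zero_add, transpose_neg, Matrix.mul_neg, Matrix.neg_mul, ← neg_add,
        eq_neg_iff_add_eq_zero, ← add_assoc, hX]
    rw [hC0, rank_fromBlocks_add_mul_transpose]
  · intro hrank
    obtain ⟨Y, hQ, hQB⟩ := exists_isSymm_mul_mul_eq_self B
    obtain ⟨X, hX⟩ := exists_eq_add_mul_transpose_of_isSymm hC hQ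
    set P := 1 - B * Y
    have hBP : Bᵀ * P = 0 := by
      rw [Matrix.mul_sub, Matrix.mul_one, ← hQ.eq, ← transpose_mul, hQB, sub_self]
    have hPP : P * P = P := by
      rw [Matrix.sub_mul, Matrix.one_mul, Matrix.mul_sub, Matrix.mul_one,
        ← Matrix.mul_assoc, hQB, sub_self, sub_zero]
    have hD : P * C * P = 0 := by
      have hker := ker_mulVecLin_transpose_le_of_rank_fromBlocks_eq (D := P * C * P)
        (by rw [← Matrix.mul_assoc, ← Matrix.mul_assoc, hBP, Matrix.zero_mul, Matrix.zero_mul])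
        (by rwa [hX, rank_fromBlocks_add_mul_transpose] at hrank)
      calc P * C * P = P * C * P * P := by rw [Matrix.mul_assoc (P * C), hPP]
        _ = 0 := mul_eq_zero_of_ker_le hker hBP
    refine ⟨-X, ?_⟩
    rw [hX, hD, zero_add, transpose_neg, Matrix.mul_neg, Matrix.neg_mul]
    abel

end LinearOrderedField

end Matrix

/-- Solvability of AΣ + ΣA' + B₁B₁' + BX' + XB' = 0 is equivalent to the rank condition
rank [[AΣ+ΣA'+B₁B₁', B],[B', 0]] = rank [[0, B],[B', 0]]. -/
theorem stmt_6 {n m p : ℕ}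
    (A : Matrix (Fin n) (Fin n) ℝ) (B : Matrix (Fin n) (Fin m) ℝ)
    (B₁ : Matrix (Fin n) (Fin p) ℝ) (S : Matrix (Fin n) (Fin n) ℝ)
    (hS : S.PosDef) :
    (∃ X : Matrix (Fin n) (Fin m) ℝ,
        A * S + S * Aᵀ + B₁ * B₁ᵀ + B * Xᵀ + X * Bᵀ = 0) ↔
    (Matrix.fromBlocks (A * S + S * Aᵀ + B₁ * B₁ᵀ) B Bᵀ 0).rank
      = (Matrix.fromBlocks (0 : Matrix (Fin n) (Fin n) ℝ) B Bᵀ 0).rank := by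
  have hSt : Sᵀ = S := by
    rw [← conjTranspose_eq_transpose_of_trivial]
    exact hS.isHermitian
  have hC : (A * S + S * Aᵀ + B₁ * B₁ᵀ).IsSymm := by
    have hSA : S * Aᵀ = (A * S)ᵀ := by rw [transpose_mul, hSt]
    rw [hSA]
    exact (isSymm_add_transpose_self _).add (by rw [IsSymm, transpose_mul, transpose_transpose])
  exact exists_add_mul_transpose_eq_zero_iff_rank_fromBlocks_eq hC B
end

section
/- A symmetric matrix W ∈ ℝ^{n×n} lies in the range of the map X ↦ BX' + XB' (X ∈ ℝ^{n×m}) if and only if Π_⊥ W Π_⊥ = 0, where Π_⊥ is the orthogonal projection onto the orthogonal complement of the range of B. -/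
/-!
Write `R(B)` for the column space of `B`. If `P B = 0`, then `P (B Xᵀ + X Bᵀ) P = 0` for
every `X`. Conversely, `1 - P` maps into `R(B)`, since its range is orthogonal to
`R(P) = R(B)ᗮ`; so `1 - P = B C` for some `C`. If `P W P = 0`, then `X = ½ (1 + P) W Cᵀ`
works, because
`(1 - P) W (1 + P) + (1 + P) W (1 - P) = 2 (W - P W P)`.
-/

open Matrix

namespace Matrix

variable {K ι κ μ : Type*} [Fintype ι]

theorem exists_mul_eq_of_vecMul_eq_zero [Field K] [Fintype κ]
    {A : Matrix ι μ K} {B : Matrix ι κ K}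
    (h : ∀ x, x ᵥ* B = 0 → x ᵥ* A = 0) : ∃ C : Matrix κ μ K, B * C = A := by
  have hcol (j : μ) : ∃ c : κ → K, ∀ x, ∑ k, c k * (x ᵥ* B) k = (x ᵥ* A) j := by
    have hker : ⨅ k, LinearMap.ker (LinearMap.proj k ∘ₗ B.vecMulLinear) ≤
        LinearMap.ker (LinearMap.proj j ∘ₗ A.vecMulLinear) := fun x hx => by
      have hxB : x ᵥ* B = 0 := funext fun k => by simpa using Submodule.mem_iInf _ |>.mp hx k
      simp [h x hxB]
    obtain ⟨c, hc⟩ := (Submodule.mem_span_range_iff_exists_fun K).mp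
      (mem_span_of_iInf_ker_le_ker hker)
    exact ⟨c, fun x => by simpa using LinearMap.congr_fun hc x⟩
  choose c hc using hcol
  refine ⟨(of c)ᵀ, ext_iff_vecMul.mpr fun x => funext fun j => ?_⟩
  rw [← vecMul_vecMul, ← hc]
  simp [vecMul, dotProduct, mul_comm]

theorem transpose_mul_eq_zero_of_range_le_ker [CommRing K] {P : Matrix ι ι K} {B : Matrix ι κ K}
    (h : LinearMap.range P.mulVecLin ≤ LinearMap.ker B.vecMulLinear) : Pᵀ * B = 0 :=
  ext_iff_vecMul.mpr fun z => by
    rw [← vecMul_mulVec, vecMul_zero]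
    exact h ⟨z, rfl⟩

theorem exists_mul_eq_one_sub_of_ker_le_range [Field K] [Fintype κ] [DecidableEq ι]
    {P : Matrix ι ι K} {B : Matrix ι κ K} (hP : Pᵀ = P) (hPidem : P * P = P)
    (h : LinearMap.ker B.vecMulLinear ≤ LinearMap.range P.mulVecLin) :
    ∃ C : Matrix κ ι K, B * C = 1 - P := by
  refine exists_mul_eq_of_vecMul_eq_zero fun x hx => ?_
  obtain ⟨z, rfl⟩ := h hx
  rw [mulVecLin_apply, vecMul_mulVec, hP, Matrix.mul_sub, Matrix.mul_one, hPidem, sub_self,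
    vecMul_zero]

theorem exists_eq_mul_transpose_add_mul_transpose [CommRing K] [Invertible (2 : K)]
    [Fintype κ] [DecidableEq ι] {B : Matrix ι κ K} {C : Matrix κ ι K} {P W : Matrix ι ι K}
    (hC : B * C = 1 - P) (hP : Pᵀ = P) (hW : Wᵀ = W) (hPWP : P * W * P = 0) :
    ∃ X : Matrix ι κ K, W = B * Xᵀ + X * Bᵀ := by
  refine ⟨⅟(2 : K) • ((1 + P) * W * Cᵀ), ?_⟩
  have hBX :
      B * (⅟(2 : K) • ((1 + P) * W * Cᵀ))ᵀ = ⅟(2 : K) • ((1 - P) * W * (1 + P)) := by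
    rw [transpose_smul, transpose_mul, transpose_mul, hW, transpose_add, transpose_one, hP,
      transpose_transpose, Matrix.mul_smul, ← Matrix.mul_assoc, ← Matrix.mul_assoc, hC]
  have hXB :
      ⅟(2 : K) • ((1 + P) * W * Cᵀ) * Bᵀ = ⅟(2 : K) • ((1 + P) * W * (1 - P)) := by
    rw [smul_mul, Matrix.mul_assoc _ Cᵀ, ← transpose_mul, hC, transpose_sub, transpose_one, hP]
  have hsum : (1 - P) * W * (1 + P) + (1 + P) * W * (1 - P) =
      (W - P * W * P) + (W - P * W * P) := by
    noncomm_ring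
  rw [hBX, hXB, ← smul_add, hsum, hPWP, sub_zero, ← two_smul K, smul_smul, invOf_mul_self,
    one_smul]

end Matrix

/-- A symmetric W lies in the range of X ↦ BX' + XB' iff Π_⊥ W Π_⊥ = 0, where Π_⊥ = P is
the orthogonal projection onto the orthogonal complement of the column space of B
(characterized here by: P is symmetric idempotent whose range is exactly the set of
vectors orthogonal to every vector B u in the range of B). -/
theorem stmt_7 {n m : ℕ}
    (B : Matrix (Fin n) (Fin m) ℝ) (W P : Matrix (Fin n) (Fin n) ℝ)
    (hW : Wᵀ = W)
    (hPsym : Pᵀ = P) (hPidem : P * P = P)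
    (hPrange : ∀ x : Fin n → ℝ,
      x ∈ LinearMap.range P.mulVecLin ↔ ∀ u : Fin m → ℝ, x ⬝ᵥ B.mulVec u = 0) :
    (∃ X : Matrix (Fin n) (Fin m) ℝ, W = B * Xᵀ + X * Bᵀ) ↔ P * W * P = 0 := by
  have hrange : LinearMap.range P.mulVecLin = LinearMap.ker B.vecMulLinear := by
    ext x
    simp only [hPrange, dotProduct_mulVec, dotProduct_eq_zero_iff, LinearMap.mem_ker,
      vecMulLinear_apply]
  have hPB : P * B = 0 := hPsym ▸ transpose_mul_eq_zero_of_range_le_ker hrange.le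
  have hBP : Bᵀ * P = 0 := by rw [← hPsym, ← transpose_mul, hPB, transpose_zero]
  constructor
  · rintro ⟨X, rfl⟩
    calc P * (B * Xᵀ + X * Bᵀ) * P = P * B * Xᵀ * P + P * X * (Bᵀ * P) := by
          simp only [Matrix.mul_add, Matrix.add_mul, Matrix.mul_assoc]
      _ = 0 := by rw [hPB, hBP, Matrix.zero_mul, Matrix.zero_mul, Matrix.mul_zero, add_zero]
  · intro hPWP
    obtain ⟨C, hC⟩ := exists_mul_eq_one_sub_of_ker_le_range hPsym hPidem hrange.ge
    exact exists_eq_mul_transpose_add_mul_transpose hC hPsym hW hPWP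
end

section
/- Let Σ > 0 be a stationary covariance, i.e., there exists K with A - BK Hurwitz and (A-BK)Σ + Σ(A-BK)' + B₁B₁' = 0. For ε > 0 set K_ε = K + (ε/2)B'Σ⁻¹. Then (A - BK_ε)Σ + Σ(A - BK_ε)' = -εBB' - B₁B₁' ≤ -εBB', and A - BK_ε is Hurwitz. -/
/-!
Substituting `K_ε` shifts the closed loop by `-(ε/2) B Bᵀ Σ⁻¹`, which adds exactly `-ε B Bᵀ` to the
Lyapunov expression; this gives the identity and the inequality.

For stability, let `x ≠ 0` satisfy `(A - B K_ε)ᴴ x = conj μ • x`. The quadratic form of the Lyapunov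
identity at `x` reads `2 Re μ · x*Σx = -x*Qx` with `Q ≥ ε B Bᵀ ≥ 0`, so `Re μ ≤ 0`, and if
`Re μ = 0` then `Q x = 0`, hence `B Bᵀ x = 0`. The feedback term then vanishes on `x`, so `conj μ` is
also an eigenvalue of `(A - B K)ᴴ`, and `Re μ < 0` because `A - B K` is Hurwitz.
-/

open Matrix

/-- All eigenvalues (over ℂ) have strictly negative real part. -/
def Hurwitz {n : ℕ} (M : Matrix (Fin n) (Fin n) ℝ) : Prop :=
  ∀ μ ∈ spectrum ℂ (M.map (Complex.ofReal)), μ.re < 0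

open scoped ComplexOrder

namespace Matrix

variable {ι : Type*} [Fintype ι]

theorem mem_spectrum_iff_exists_mulVec_eq_smul [DecidableEq ι] {K : Type*} [Field K]
    {A : Matrix ι ι K} {μ : K} : μ ∈ spectrum K A ↔ ∃ v ≠ 0, A *ᵥ v = μ • v := by
  simp [← spectrum_toLin', ← Module.End.hasEigenvalue_iff_mem_spectrum,
    Module.End.hasEigenvalue_iff, Submodule.ne_bot_iff, toLin'_apply, and_comm]

theorem star_mem_spectrum_conjTranspose_iff [DecidableEq ι] {A : Matrix ι ι ℂ} {μ : ℂ} :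
    star μ ∈ spectrum ℂ Aᴴ ↔ μ ∈ spectrum ℂ A := by
  rw [← star_eq_conjTranspose, spectrum.map_star, Set.star_mem_star]

theorem dotProduct_lyapunov_mulVec_of_conjTranspose_mulVec_eq_smul {R : Type*} [CommRing R]
    [StarRing R] {N S : Matrix ι ι R} {x : ι → R} {μ : R} (hx : Nᴴ *ᵥ x = star μ • x) :
    star x ⬝ᵥ (N * S + S * Nᴴ) *ᵥ x = (μ + star μ) * (star x ⬝ᵥ S *ᵥ x) := by
  have hleft : star x ᵥ* N = μ • star x := by
    rw [← conjTranspose_conjTranspose N, ← star_mulVec, hx, star_smul, star_star]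
  rw [add_mulVec, dotProduct_add, ← mulVec_mulVec, ← mulVec_mulVec, dotProduct_mulVec, hleft, hx,
    smul_dotProduct, mulVec_smul, dotProduct_smul, smul_eq_mul, smul_eq_mul, add_mul]

theorem PosSemidef.mulVec_eq_zero_of_sub {𝕜 : Type*} [RCLike 𝕜] {P Q : Matrix ι ι 𝕜}
    (hP : P.PosSemidef) (hQP : (Q - P).PosSemidef) {x : ι → 𝕜} (hQx : Q *ᵥ x = 0) :
    P *ᵥ x = 0 := by
  rw [← hP.dotProduct_mulVec_zero_iff]
  have hsum : star x ⬝ᵥ P *ᵥ x + star x ⬝ᵥ (Q - P) *ᵥ x = 0 := by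
    rw [← dotProduct_add, ← add_mulVec, add_sub_cancel, hQx, dotProduct_zero]
  exact ((add_eq_zero_iff_of_nonneg (hP.dotProduct_mulVec_nonneg x)
    (hQP.dotProduct_mulVec_nonneg x)).mp hsum).1

omit [Fintype ι] in
theorem conjTranspose_map_ofReal {m : Type*} (M : Matrix m ι ℝ) :
    (M.map Complex.ofReal)ᴴ = Mᵀ.map Complex.ofReal := by
  ext; simp

theorem map_ofReal_mul {m k : Type*} (M : Matrix m ι ℝ) (N : Matrix ι k ℝ) :
    (M * N).map Complex.ofReal = M.map Complex.ofReal * N.map Complex.ofReal :=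
  Matrix.map_mul (f := Complex.ofRealHom)

theorem PosSemidef.map_ofReal [DecidableEq ι] {S : Matrix ι ι ℝ} (hS : S.PosSemidef) :
    (S.map Complex.ofReal).PosSemidef := by
  open scoped MatrixOrder Matrix.Norms.L2Operator in
  obtain ⟨L, rfl⟩ := CStarAlgebra.nonneg_iff_eq_star_mul_self.mp hS.nonneg
  rw [star_eq_conjTranspose, conjTranspose_eq_transpose_of_trivial, map_ofReal_mul,
    ← conjTranspose_map_ofReal]
  exact posSemidef_conjTranspose_mul_self _

theorem PosDef.map_ofReal [DecidableEq ι] {S : Matrix ι ι ℝ} (hS : S.PosDef) :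
    (S.map Complex.ofReal).PosDef := by
  have hdet : (S.map Complex.ofReal).det = S.det := (RingHom.map_det Complex.ofRealHom S).symm
  rw [hS.posSemidef.map_ofReal.posDef_iff_det_ne_zero, hdet]
  exact_mod_cast hS.det_pos.ne'

theorem re_neg_or_mulVec_eq_zero_of_lyapunov [DecidableEq ι] {N S Q : Matrix ι ι ℂ}
    (hS : S.PosDef) (hQ : Q.PosSemidef) (hlyap : N * S + S * Nᴴ = -Q) {x : ι → ℂ} (hx : x ≠ 0)
    {μ : ℂ} (hNx : Nᴴ *ᵥ x = star μ • x) : μ.re < 0 ∨ Q *ᵥ x = 0 := by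
  have hquad : (μ + star μ) * (star x ⬝ᵥ S *ᵥ x) = -(star x ⬝ᵥ Q *ᵥ x) := by
    rw [← dotProduct_lyapunov_mulVec_of_conjTranspose_mulVec_eq_smul hNx, hlyap, neg_mulVec,
      dotProduct_neg]
  have hre : 2 * μ.re * (star x ⬝ᵥ S *ᵥ x).re = -(star x ⬝ᵥ Q *ᵥ x).re := by
    simpa [Complex.add_conj, Complex.re_ofReal_mul] using congrArg Complex.re hquad
  obtain ⟨hQre, hQim⟩ := Complex.nonneg_iff.mp (hQ.dotProduct_mulVec_nonneg x)
  have hSre : 0 < (star x ⬝ᵥ S *ᵥ x).re := hS.re_dotProduct_pos hx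
  rcases lt_or_ge μ.re 0 with hμ | hμ
  · exact .inl hμ
  · have hQre0 : (star x ⬝ᵥ Q *ᵥ x).re = 0 := by nlinarith
    exact .inr ((hQ.dotProduct_mulVec_zero_iff x).mp (Complex.ext hQre0 hQim.symm))

theorem sub_mul_inv_two_smul_inv_lyapunov {K : Type*} [DecidableEq ι] [Field K] [CharZero K]
    {M P S : Matrix ι ι K} (hS : IsUnit S.det) (hSt : Sᵀ = S) (hPt : Pᵀ = P) :
    (M - P * ((2 : K)⁻¹ • S⁻¹)) * S + S * (M - P * ((2 : K)⁻¹ • S⁻¹))ᵀ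
      = M * S + S * Mᵀ - P := by
  have hleft : P * ((2 : K)⁻¹ • S⁻¹) * S = (2 : K)⁻¹ • P := by
    rw [mul_smul_comm, smul_mul_assoc, Matrix.mul_assoc, nonsing_inv_mul _ hS, Matrix.mul_one]
  have hright : S * (P * ((2 : K)⁻¹ • S⁻¹))ᵀ = (2 : K)⁻¹ • P := by
    rw [transpose_mul, transpose_smul, transpose_nonsing_inv, hSt, hPt, smul_mul_assoc,
      mul_smul_comm, ← Matrix.mul_assoc, mul_nonsing_inv _ hS, Matrix.one_mul]
  rw [transpose_sub, Matrix.sub_mul, Matrix.mul_sub, hleft, hright]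
  module

theorem sub_mul_add_half_smul_transpose_mul_inv {m : Type*} [Fintype m] [DecidableEq ι]
    {K : Type*} [Field K] (A : Matrix ι ι K) (B : Matrix ι m K) (F : Matrix m ι K)
    (S : Matrix ι ι K) (ε : K) :
    A - B * (F + (ε / 2) • (Bᵀ * S⁻¹)) = A - B * F - ε • (B * Bᵀ) * ((2 : K)⁻¹ • S⁻¹) := by
  rw [Matrix.mul_add, Matrix.mul_smul, smul_mul_assoc, mul_smul_comm, smul_smul, Matrix.mul_assoc,
    div_eq_mul_inv]
  abel

end Matrix

theorem Hurwitz.of_lyapunov_of_eq_sub_mul {n : ℕ} {M M₀ S P G : Matrix (Fin n) (Fin n) ℝ}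
    (hM₀ : Hurwitz M₀) (hS : S.PosDef) (hP : P.PosSemidef)
    (hlyap : (-P - (M * S + S * Mᵀ)).PosSemidef) (hM : M = M₀ - P * G) : Hurwitz M := by
  intro μ hμ
  obtain ⟨x, hx, hMx⟩ := mem_spectrum_iff_exists_mulVec_eq_smul.mp
    (star_mem_spectrum_conjTranspose_iff.mpr hμ)
  set Q := -(M * S + S * Mᵀ)
  have hQP : (Q - P).PosSemidef := by
    convert hlyap using 1
    simp only [Q]
    abel
  have hQ : Q.PosSemidef := by simpa using hP.add hQP
  have hlyapC : M.map Complex.ofReal * S.map Complex.ofReal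
      + S.map Complex.ofReal * (M.map Complex.ofReal)ᴴ = -Q.map Complex.ofReal := by
    rw [conjTranspose_map_ofReal, ← map_ofReal_mul, ← map_ofReal_mul,
      ← Matrix.map_add _ Complex.ofReal_add, ← Matrix.map_neg _ Complex.ofReal_neg, neg_neg]
  rcases re_neg_or_mulVec_eq_zero_of_lyapunov hS.map_ofReal hQ.map_ofReal hlyapC hx hMx
    with hμ | hQx
  · exact hμ
  have hPx : P.map Complex.ofReal *ᵥ x = 0 := by
    refine hP.map_ofReal.mulVec_eq_zero_of_sub ?_ hQx
    rw [← Matrix.map_sub _ Complex.ofReal_sub]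
    exact hQP.map_ofReal
  have hPt : Pᵀ = P := by simpa [conjTranspose_eq_transpose_of_trivial] using hP.isHermitian.eq
  have hM₀x : (M₀.map Complex.ofReal)ᴴ *ᵥ x = star μ • x := by
    rw [← hMx, conjTranspose_map_ofReal, conjTranspose_map_ofReal, hM, transpose_sub,
      transpose_mul, hPt, Matrix.map_sub _ Complex.ofReal_sub, map_ofReal_mul, sub_mulVec,
      ← mulVec_mulVec, hPx, mulVec_zero, sub_zero]
  exact hM₀ μ (star_mem_spectrum_conjTranspose_iff.mp
    (mem_spectrum_iff_exists_mulVec_eq_smul.mpr ⟨x, hx, hM₀x⟩))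

/-- For a stationary covariance Σ with stabilizing gain K, the perturbed gain
K_ε = K + (ε/2)B'Σ⁻¹ satisfies (A-BK_ε)Σ + Σ(A-BK_ε)' = -εBB' - B₁B₁' ≤ -εBB'
(in the Loewner order) and A - BK_ε is Hurwitz. -/
theorem stmt_10 {n m p : ℕ}
    (A : Matrix (Fin n) (Fin n) ℝ) (B : Matrix (Fin n) (Fin m) ℝ)
    (B₁ : Matrix (Fin n) (Fin p) ℝ) (S : Matrix (Fin n) (Fin n) ℝ)
    (K : Matrix (Fin m) (Fin n) ℝ)
    (hS : S.PosDef)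
    (hK : Hurwitz (A - B * K))
    (hlyap : (A - B * K) * S + S * (A - B * K)ᵀ + B₁ * B₁ᵀ = 0)
    (ε : ℝ) (hε : 0 < ε) :
    (A - B * (K + (ε / 2) • (Bᵀ * S⁻¹))) * S
        + S * (A - B * (K + (ε / 2) • (Bᵀ * S⁻¹)))ᵀ
      = -(ε • (B * Bᵀ)) - B₁ * B₁ᵀ ∧
    ((-(ε • (B * Bᵀ))) - ((A - B * (K + (ε / 2) • (Bᵀ * S⁻¹))) * S
        + S * (A - B * (K + (ε / 2) • (Bᵀ * S⁻¹)))ᵀ)).PosSemidef ∧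
    Hurwitz (A - B * (K + (ε / 2) • (Bᵀ * S⁻¹))) := by
  have hgain := sub_mul_add_half_smul_transpose_mul_inv A B K S ε
  set M := A - B * (K + (ε / 2) • (Bᵀ * S⁻¹))
  have hSt : Sᵀ = S := by simpa [conjTranspose_eq_transpose_of_trivial] using hS.isHermitian.eq
  have hBBt : (ε • (B * Bᵀ))ᵀ = ε • (B * Bᵀ) := by
    rw [transpose_smul, transpose_mul, transpose_transpose]
  have hεBB : (ε • (B * Bᵀ)).PosSemidef := by
    simpa [conjTranspose_eq_transpose_of_trivial] using
      (posSemidef_self_mul_conjTranspose B).smul hε.le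
  have hidentity : M * S + S * Mᵀ = -(ε • (B * Bᵀ)) - B₁ * B₁ᵀ := by
    rw [hgain, sub_mul_inv_two_smul_inv_lyapunov hS.det_pos.ne'.isUnit hSt hBBt,
      eq_neg_of_add_eq_zero_left hlyap]
    abel
  have hineq : (-(ε • (B * Bᵀ)) - (M * S + S * Mᵀ)).PosSemidef := by
    rw [hidentity, sub_sub_cancel]
    simpa [conjTranspose_eq_transpose_of_trivial] using posSemidef_self_mul_conjTranspose B₁
  exact ⟨hidentity, hineq, hK.of_lyapunov_of_eq_sub_mul hS hεBB hineq hgain⟩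
end

section
/- If Π is symmetric and satisfies the algebraic Riccati equation A'Π + ΠA - ΠBB'Π + Q = 0 where Q := -A'Π - ΠA + ΠBB'Π, then for any other symmetric solution Π̃ of the same ARE with A - BB'Π Hurwitz and A - BB'Π̃ Hurwitz, one has Π = Π̃ (uniqueness of the stabilizing solution of the ARE). -/
open Matrix Polynomial

lemma charmatrix_transpose' {K : Type*} [CommRing K] {n : Type*} [Fintype n] [DecidableEq n]
    (M : Matrix n n K) : charmatrix (Mᵀ) = (charmatrix M)ᵀ := by
  ext i j
  by_cases h : i = j
  · subst h; simp [charmatrix_apply]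
  · simp [charmatrix_apply, Matrix.diagonal_apply_ne _ h, Matrix.diagonal_apply_ne _ (Ne.symm h),
      Matrix.transpose_apply]

lemma charpoly_transpose' {K : Type*} [CommRing K] {n : Type*} [Fintype n] [DecidableEq n]
    (M : Matrix n n K) : (Mᵀ).charpoly = M.charpoly := by
  rw [Matrix.charpoly, charmatrix_transpose', Matrix.det_transpose, Matrix.charpoly]

lemma eval_charpoly' {K : Type*} [CommRing K] {n : Type*} [Fintype n] [DecidableEq n]
    (M : Matrix n n K) (μ : K) :
    Polynomial.eval μ M.charpoly = (Matrix.diagonal (fun _ => μ) - M).det := by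
  rw [Matrix.charpoly, ← Polynomial.coe_evalRingHom, RingHom.map_det]
  congr 1
  ext i j
  by_cases h : i = j
  · subst h; simp [charmatrix_apply]
  · simp [charmatrix_apply, Matrix.diagonal_apply_ne _ h]

lemma mem_spectrum_iff_isRoot' {K : Type*} [Field K] {n : Type*} [Fintype n] [DecidableEq n]
    (M : Matrix n n K) (μ : K) : μ ∈ spectrum K M ↔ M.charpoly.IsRoot μ := by
  rw [spectrum.mem_iff, Polynomial.IsRoot, eval_charpoly']
  have halg : (algebraMap K (Matrix n n K)) μ = Matrix.diagonal (fun _ => μ) := by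
    ext i j
    by_cases h : i = j
    · subst h; simp [Matrix.algebraMap_matrix_apply]
    · simp [Matrix.algebraMap_matrix_apply, h, Matrix.diagonal_apply_ne _ h]
  rw [halg, Matrix.isUnit_iff_isUnit_det, isUnit_iff_ne_zero, not_not]

lemma aeval_intertwine' {R : Type*} [CommRing R] {A : Type*} [Ring A] [Algebra R A]
    {X Y D : A} (h : X * D = D * Y) (p : R[X]) :
    (Polynomial.aeval X p) * D = D * (Polynomial.aeval Y p) := by
  have hpow : ∀ j : ℕ, X ^ j * D = D * Y ^ j := by
    intro j
    induction j with
    | zero => simp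
    | succ j hj => rw [pow_succ, pow_succ, mul_assoc, h, ← mul_assoc, hj, mul_assoc]
  induction p using Polynomial.induction_on with
  | C a =>
    simp only [Polynomial.aeval_C]
    rw [Algebra.commutes]
  | add p q hp hq => simp [add_mul, mul_add, hp, hq]
  | monomial k a ih =>
    simp only [_root_.map_mul, _root_.map_pow, Polynomial.aeval_C, Polynomial.aeval_X]
    calc algebraMap R A a * X ^ (k + 1) * D = algebraMap R A a * (X ^ (k + 1) * D) := by
          rw [mul_assoc]
      _ = algebraMap R A a * (D * Y ^ (k + 1)) := by rw [hpow]
      _ = algebraMap R A a * D * Y ^ (k + 1) := by rw [mul_assoc]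
      _ = D * algebraMap R A a * Y ^ (k + 1) := by rw [Algebra.commutes]
      _ = D * (algebraMap R A a * Y ^ (k + 1)) := by rw [mul_assoc]

lemma map_ofReal_mul' {n : ℕ} (M N : Matrix (Fin n) (Fin n) ℝ) :
    (M * N).map Complex.ofReal = M.map Complex.ofReal * N.map Complex.ofReal :=
  Matrix.map_mul (f := Complex.ofRealHom)

/-- The ARE A'Π + ΠA - ΠBB'Π + Q = 0, with Q := -A'Π - ΠA + ΠBB'Π, has at most one
stabilizing symmetric solution: any other symmetric stabilizing solution coincides
with Π. -/
theorem stmt_12 {n m : ℕ}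
    (A : Matrix (Fin n) (Fin n) ℝ) (B : Matrix (Fin n) (Fin m) ℝ)
    (P P' : Matrix (Fin n) (Fin n) ℝ)
    (hPsym : Pᵀ = P) (hP'sym : P'ᵀ = P')
    (Q : Matrix (Fin n) (Fin n) ℝ)
    (hQ : Q = -Aᵀ * P - P * A + P * (B * Bᵀ) * P)
    (hARE : Aᵀ * P + P * A - P * (B * Bᵀ) * P + Q = 0)
    (hARE' : Aᵀ * P' + P' * A - P' * (B * Bᵀ) * P' + Q = 0)
    (hstab : Hurwitz (A - B * Bᵀ * P))
    (hstab' : Hurwitz (A - B * Bᵀ * P')) :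
    P = P' := by
  rcases Nat.eq_zero_or_pos n with h0 | hn
  · subst h0; ext i j; exact i.elim0
  haveI : Nonempty (Fin n) := ⟨⟨0, hn⟩⟩
  set F : Matrix (Fin n) (Fin n) ℝ := A - B * Bᵀ * P with hF
  set F' : Matrix (Fin n) (Fin n) ℝ := A - B * Bᵀ * P' with hF'
  set Δ : Matrix (Fin n) (Fin n) ℝ := P - P' with hΔ
  have hFt : Fᵀ = Aᵀ - P * (B * Bᵀ) := by
    rw [hF, Matrix.transpose_sub, Matrix.transpose_mul, Matrix.transpose_mul,
      Matrix.transpose_transpose, hPsym]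
  have h2 : Aᵀ * P + P * A - P * (B * Bᵀ) * P = Aᵀ * P' + P' * A - P' * (B * Bᵀ) * P' := by
    have h3 : (Aᵀ * P + P * A - P * (B * Bᵀ) * P + Q)
        - (Aᵀ * P' + P' * A - P' * (B * Bᵀ) * P' + Q) = 0 := by
      rw [hARE, hARE', sub_zero]
    have h4 : (Aᵀ * P + P * A - P * (B * Bᵀ) * P)
        - (Aᵀ * P' + P' * A - P' * (B * Bᵀ) * P') = 0 := by
      rw [← h3]; abel
    exact sub_eq_zero.mp h4
  have key : Fᵀ * Δ = Δ * (-F') := by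
    have expand : Fᵀ * Δ - Δ * (-F') =
        (Aᵀ * P + P * A - P * (B * Bᵀ) * P) - (Aᵀ * P' + P' * A - P' * (B * Bᵀ) * P') := by
      rw [hFt, hΔ, hF']
      noncomm_ring
    have : Fᵀ * Δ - Δ * (-F') = 0 := by rw [expand, h2, sub_self]
    exact sub_eq_zero.mp this
  -- pass to complex matrices
  set X : Matrix (Fin n) (Fin n) ℂ := (F.map Complex.ofReal)ᵀ with hX
  set Y : Matrix (Fin n) (Fin n) ℂ := -(F'.map Complex.ofReal) with hY
  set D : Matrix (Fin n) (Fin n) ℂ := Δ.map Complex.ofReal with hD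
  have hXD : X * D = D * Y := by
    have hmap := congrArg (fun M : Matrix (Fin n) (Fin n) ℝ => M.map Complex.ofReal) key
    have e1 : (Fᵀ * Δ).map Complex.ofReal = X * D := by
      rw [map_ofReal_mul', hX, hD, Matrix.transpose_map]
    have e2 : (Δ * (-F')).map Complex.ofReal = D * Y := by
      rw [map_ofReal_mul', hD, hY]
      congr 1
      ext i j
      simp [Matrix.map_apply]
    rw [← e1, ← e2, hmap]
  have hspecX : ∀ μ ∈ spectrum ℂ X, μ.re < 0 := by
    intro μ hμ
    apply hstab μ
    rw [mem_spectrum_iff_isRoot'] at hμ ⊢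
    rwa [hX, charpoly_transpose'] at hμ
  have hspecY : ∀ μ ∈ spectrum ℂ Y, 0 < μ.re := by
    intro μ hμ
    have hneg : -μ ∈ spectrum ℂ (F'.map Complex.ofReal) := by
      rw [hY, ← spectrum.neg_eq] at hμ
      exact Set.mem_neg.mp hμ
    have := hstab' _ hneg
    simp only [Complex.neg_re] at this
    linarith
  set p : Polynomial ℂ := X.charpoly with hp
  have hdeg : 0 < p.degree := by
    rw [hp, Matrix.charpoly_degree_eq_dim, Fintype.card_fin]
    exact_mod_cast hn
  have h0 : Polynomial.aeval X p = 0 := Matrix.aeval_self_charpoly X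
  have hiso := aeval_intertwine' hXD p
  rw [h0, zero_mul] at hiso
  have hunit : IsUnit (Polynomial.aeval Y p) := by
    rw [← spectrum.zero_notMem_iff (R := ℂ),
      spectrum.map_polynomial_aeval_of_degree_pos Y p hdeg]
    rintro ⟨μ, hμ, hev⟩
    have hroot : p.IsRoot μ := hev
    have hμX : μ ∈ spectrum ℂ X := (mem_spectrum_iff_isRoot' X μ).mpr hroot
    have := hspecX μ hμX
    have := hspecY μ hμ
    linarith
  obtain ⟨u, hu⟩ := hunit
  have hD0 : D = 0 := by
    have h5 : D * (u : Matrix (Fin n) (Fin n) ℂ) = 0 := by rw [hu]; exact hiso.symm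
    calc D = D * u * ↑u⁻¹ := by rw [mul_assoc, Units.mul_inv, mul_one]
      _ = 0 := by rw [h5, zero_mul]
  have hΔ0 : Δ = 0 := by
    ext i j
    have h6 : D i j = 0 := by rw [hD0]; rfl
    rw [hD, Matrix.map_apply] at h6
    exact_mod_cast h6
  exact sub_eq_zero.mp hΔ0
end

section
/- For A = [[0,1],[0,0]], B = [0,1]', B₁ = [1,0]', the matrix Σ₁ = [[1,-1/2],[-1/2,1/2]] is positive definite, the equation AΣ₁ + Σ₁A' + B₁B₁' + BX' + XB' = 0 has the unique solution X giving K = -X'Σ₁⁻¹ = [1, 1], and A - BK is Hurwitz, even though range(B) is not contained in range(B₁). -/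
/-!
Σ₁ is positive definite by the leading-minor criterion for 2 × 2 matrices. For a nonzero column
B the map X ↦ B Xᵀ + X Bᵀ is injective, so the Lyapunov equation, which is affine in X, has at
most one solution, and X = [-1/2; 0] is one. The closed loop A - BK = [[0, 1], [-1, -1]] has
negative trace and positive determinant, and the roots of μ² - tr μ + det then lie in the open left
half-plane.
-/

open Matrix

theorem Matrix.posDef_of_fin_two {a b c : ℝ} (ha : 0 < a) (hdet : 0 < a * c - b ^ 2) :
    (!![a, b; b, c]).PosDef := by
  rw [posDef_iff_dotProduct_mulVec]
  refine ⟨by ext i j; fin_cases i <;> fin_cases j <;> rfl, fun x hx => ?_⟩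
  have hform : star x ⬝ᵥ !![a, b; b, c] *ᵥ x = a * x 0 ^ 2 + 2 * b * x 0 * x 1 + c * x 1 ^ 2 := by
    simp [mulVec, dotProduct, Fin.sum_univ_two]
    ring
  rw [hform]
  -- completing the square: `a * Q x = (a x₀ + b x₁)² + (ac - b²) x₁²`
  by_cases h1 : x 1 = 0
  · have h0 : x 0 ≠ 0 := fun h0 => hx (by ext i; fin_cases i <;> assumption)
    rw [h1]
    nlinarith [pow_two_pos_of_ne_zero h0]
  · nlinarith [sq_nonneg (a * x 0 + b * x 1), mul_pos hdet (pow_two_pos_of_ne_zero h1)]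

theorem Complex.re_neg_of_sq_sub_mul_add_eq_zero {t d : ℝ} {μ : ℂ} (ht : t < 0) (hd : 0 < d)
    (h : μ ^ 2 - t * μ + d = 0) : μ.re < 0 := by
  have hre : μ.re ^ 2 - μ.im ^ 2 - t * μ.re + d = 0 := by
    simpa [pow_two] using congrArg Complex.re h
  have him : μ.im * (2 * μ.re - t) = 0 := by
    have := congrArg Complex.im h
    simp [pow_two] at this
    linarith
  rcases mul_eq_zero.1 him with hreal | hre_half
  · rw [hreal] at hre
    by_contra! hnn
    nlinarith
  · linarith

theorem hurwitz_of_trace_neg_of_det_pos {M : Matrix (Fin 2) (Fin 2) ℝ} (htr : M.trace < 0)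
    (hdet : 0 < M.det) : Hurwitz M := by
  intro μ hμ
  rw [mem_spectrum_iff_isRoot_charpoly,
    show M.map Complex.ofReal = M.map Complex.ofRealHom from rfl, charpoly_map,
    Polynomial.IsRoot, Polynomial.eval_map, charpoly_fin_two] at hμ
  refine Complex.re_neg_of_sq_sub_mul_add_eq_zero htr hdet ?_
  simpa using hμ

theorem Matrix.eq_zero_of_mul_transpose_add_mul_transpose_eq_zero {m R : Type*} [CommRing R]
    [NoZeroDivisors R] [NeZero (2 : R)] {B X : Matrix m (Fin 1) R} (hB : B ≠ 0)
    (h : B * Xᵀ + X * Bᵀ = 0) : X = 0 := by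
  have hij (i j : m) : B i 0 * X j 0 + X i 0 * B j 0 = 0 := by
    simpa [mul_apply] using congrFun (congrFun h i) j
  obtain ⟨k, hk⟩ : ∃ k, B k 0 ≠ 0 := by
    by_contra! hB0
    exact hB (by ext i j; fin_cases j; exact hB0 i)
  have hXk : X k 0 = 0 := by
    have := hij k k
    rw [mul_comm (X k 0), ← two_mul] at this
    simpa [hk, two_ne_zero] using this
  ext i j
  fin_cases j
  simpa [hXk, hk] using hij i k

theorem Matrix.eq_of_add_mul_transpose_add_mul_transpose_eq {m R : Type*} [CommRing R]
    [NoZeroDivisors R] [NeZero (2 : R)] {B X Y : Matrix m (Fin 1) R} (C : Matrix m m R)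
    (hB : B ≠ 0) (hX : C + B * Xᵀ + X * Bᵀ = 0) (hY : C + B * Yᵀ + Y * Bᵀ = 0) : X = Y := by
  refine sub_eq_zero.1 (eq_zero_of_mul_transpose_add_mul_transpose_eq_zero hB ?_)
  calc B * (X - Y)ᵀ + (X - Y) * Bᵀ
      = (C + B * Xᵀ + X * Bᵀ) - (C + B * Yᵀ + Y * Bᵀ) := by
        rw [transpose_sub, Matrix.mul_sub, Matrix.sub_mul]; abel
    _ = 0 := by rw [hX, hY, sub_zero]

/-- Example 1: double integrator with noise entering only the position channel.
Σ₁ is positive definite, the Lyapunov-type equation has a unique solution X which gives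
K = -X'Σ₁⁻¹ = [1,1] with A - BK Hurwitz, even though R(B) ⊄ R(B₁). -/
theorem stmt_19 :
    let A : Matrix (Fin 2) (Fin 2) ℝ := !![0, 1; 0, 0]
    let B : Matrix (Fin 2) (Fin 1) ℝ := !![0; 1]
    let B₁ : Matrix (Fin 2) (Fin 1) ℝ := !![1; 0]
    let S : Matrix (Fin 2) (Fin 2) ℝ := !![1, -1/2; -1/2, 1/2]
    S.PosDef ∧
    (∃! X : Matrix (Fin 2) (Fin 1) ℝ,
      A * S + S * Aᵀ + B₁ * B₁ᵀ + B * Xᵀ + X * Bᵀ = 0) ∧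
    (∀ X : Matrix (Fin 2) (Fin 1) ℝ,
      A * S + S * Aᵀ + B₁ * B₁ᵀ + B * Xᵀ + X * Bᵀ = 0 →
        -(Xᵀ * S⁻¹) = (!![1, 1] : Matrix (Fin 1) (Fin 2) ℝ)) ∧
    Hurwitz (A - B * (!![1, 1] : Matrix (Fin 1) (Fin 2) ℝ)) ∧
    ¬ (LinearMap.range B.mulVecLin ≤ LinearMap.range B₁.mulVecLin) := by
  intro A B B₁ S
  set X₀ : Matrix (Fin 2) (Fin 1) ℝ := !![-1/2; 0]
  have hX₀ : A * S + S * Aᵀ + B₁ * B₁ᵀ + B * X₀ᵀ + X₀ * Bᵀ = 0 := by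
    ext i j
    fin_cases i <;> fin_cases j <;>
      simp [A, B, B₁, S, X₀, vecMul, dotProduct, vecHead, vecTail] <;> norm_num
  have hB : B ≠ 0 := fun h => by simpa [B] using congrFun (congrFun h 1) 0
  have huniq (X : Matrix (Fin 2) (Fin 1) ℝ)
      (hX : A * S + S * Aᵀ + B₁ * B₁ᵀ + B * Xᵀ + X * Bᵀ = 0) : X = X₀ :=
    eq_of_add_mul_transpose_add_mul_transpose_eq _ hB hX hX₀
  have hSinv : S⁻¹ = !![2, 2; 2, 4] := by
    refine inv_eq_right_inv ?_
    ext i j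
    fin_cases i <;> fin_cases j <;> simp [S] <;> norm_num
  refine ⟨posDef_of_fin_two one_pos (by norm_num), ⟨X₀, hX₀, huniq⟩, fun X hX => ?_, ?_, ?_⟩
  · rw [huniq X hX, hSinv]
    ext i j
    fin_cases i; fin_cases j <;> simp [X₀, mul_apply]
  · refine hurwitz_of_trace_neg_of_det_pos ?_ ?_ <;>
      simp [A, B, trace_fin_two, det_fin_two]
  · intro hle
    obtain ⟨c, hc⟩ := hle (LinearMap.mem_range_self B.mulVecLin ![1])
    simpa [B, B₁] using congrFun hc 1
end
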